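/- Let G = (U ∪ V, E) be a bipartite graph in which every vertex of U has degree at least 1 and at most 3. Fix l ≥ 1 and an injective assignment v ↦ x_v of distinct strings x_v of length l over {A, T} to the vertices v ∈ V, and let X = {x_v : v ∈ V} be the probe set. For each u ∈ U, let p_u be the primer obtained by concatenating the Watson-Crick complements comp(x_v) for v ∈ N(u) (in some fixed order) with a single letter C inserted between consecutive blocks, and set E_{p_u} = {G, C}. Then the maximum size of an induced matching in G (i.e., the maximum cardinality |U'| over pairs U' ⊆ U, V' ⊆ V with |U'| = |V'| whose induced subgraph is a matching) equals the maximum cardinality of a subset U' ⊆ U such that {p_u : u ∈ U'} is strongly 1-decodable with respect to X and the extension sets E_{p_u} = {G, C}. -/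

import Mathlib

/-!
Since the probes are `{A, T}`-strings of one positive length and the primer `p_u` separates their
complements by `C`, a probe hybridises to `p_u` exactly when it is `x_v` for a neighbour `v` of `u`;
and since no probe complement contains `G` or `C`, the extensions `{G, C}` add nothing to the
spectrum. So `U'` is strongly 1-decodable iff every `u ∈ U'` has a private neighbour, one adjacent
to no other vertex of `U'`, and a choice of private neighbours is exactly an induced matching
saturating `U'`.
-/

/-- The DNA alphabet Σ = {A, C, G, T}. -/
inductive Base : Type
  | A | C | G | T
  deriving DecidableEq

/-- Watson-Crick complement of a single base: A ↔ T, C ↔ G. -/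
def Base.comp : Base → Base
  | A => T
  | T => A
  | C => G
  | G => C

/-- Watson-Crick complement of a string. -/
def compStr (w : List Base) : List Base := w.map Base.comp

/-- The spectrum `Spec_X(y)`: the probes `x ∈ X` whose Watson-Crick complement is a
contiguous substring (infix) of `y`. -/
def Spec (X : Finset (List Base)) (y : List Base) : Finset (List Base) :=
  X.filter (fun x => compStr x <:+: y)

/-- `Spec_X(p, E) = ⋃_{e ∈ E} Spec_X(p·e)`. -/
def SpecE (X : Finset (List Base)) (p : List Base) (E : Finset Base) : Finset (List Base) :=
  E.biUnion (fun e => Spec X (p ++ [e]))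

/-- A family of primers `p i`, `i ∈ S`, with extension sets `E i`, is strongly
`r`-decodable with respect to the probe set `X` if for every `i ∈ S` the set
`Spec_X(p i) \ ⋃_{j ∈ S, j ≠ i} Spec_X(p j, E j)` has at least `r` elements. -/
def StronglyDecodableFam {ι : Type} [DecidableEq ι] (X : Finset (List Base))
    (S : Finset ι) (p : ι → List Base) (E : ι → Finset Base) (r : ℕ) : Prop :=
  ∀ i ∈ S, r ≤ ((Spec X (p i)) \ ((S.erase i).biUnion (fun j => SpecE X (p j) (E j)))).card

namespace List

variable {α : Type*}

theorem eq_nil_of_prefix_cons_of_not_mem {l v : List α} {c : α} (h : l <+: c :: v)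
    (hc : c ∉ l) : l = [] := by
  rcases prefix_cons_iff.1 h with h | ⟨t, rfl, -⟩
  · exact h
  · simp at hc

theorem IsInfix.of_append_cons_of_not_mem {w u v : List α} {c : α} (h : w <:+: u ++ c :: v)
    (hc : c ∉ w) : w <:+: u ∨ w <:+: v := by
  rcases infix_append_iff.1 h with h | h | ⟨w₁, w₂, rfl, h₁, h₂⟩
  · exact .inl h
  · rcases infix_cons_iff.1 h with h | h
    · exact .inl (by rw [eq_nil_of_prefix_cons_of_not_mem h hc]; exact nil_infix)
    · exact .inr h
  · obtain rfl : w₂ = [] := eq_nil_of_prefix_cons_of_not_mem h₂ (hc ∘ mem_append_right w₁)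
    exact .inl (by simpa using h₁.isInfix)

theorem IsInfix.of_append_singleton_of_not_mem {w u : List α} {c : α} (h : w <:+: u ++ [c])
    (hc : c ∉ w) : w <:+: u := by
  rcases h.of_append_cons_of_not_mem hc with h | h
  · exact h
  · rw [eq_nil_of_infix_nil h]; exact nil_infix

theorem infix_intercalate_of_mem {sep b : List α} :
    ∀ {bs : List (List α)}, b ∈ bs → b <:+: sep.intercalate bs
  | [_], h => by rw [mem_singleton.1 h, intercalate_singleton]
  | _ :: _ :: _, h => by
    rw [intercalate_cons_cons]
    rcases mem_cons.1 h with rfl | h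
    · exact infix_append_left.trans infix_append_left
    · exact (infix_intercalate_of_mem h).trans (suffix_append _ _).isInfix

theorem mem_of_infix_intercalate_singleton {c : α} {w : List α} (hw : w ≠ []) (hc : c ∉ w) :
    ∀ {bs : List (List α)}, (∀ b ∈ bs, b.length = w.length) → w <:+: [c].intercalate bs → w ∈ bs
  | [], _, h => absurd (eq_nil_of_infix_nil h) hw
  | [b], hb, h => by
    rw [intercalate_singleton] at h
    exact mem_singleton.2 (h.eq_of_length (hb b (mem_singleton_self b)).symm)
  | b :: b' :: bs, hb, h => by
    rw [intercalate_cons_cons, append_assoc, singleton_append] at h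
    rcases h.of_append_cons_of_not_mem hc with h | h
    · exact mem_cons.2 (.inl (h.eq_of_length (hb b mem_cons_self).symm))
    · exact mem_cons_of_mem b
        (mem_of_infix_intercalate_singleton hw hc (fun b hb' => hb b (mem_cons_of_mem _ hb')) h)

end List

theorem Base.comp_involutive : Function.Involutive Base.comp := by
  intro b; cases b <;> rfl

theorem compStr_injective : Function.Injective compStr :=
  List.map_injective_iff.2 Base.comp_involutive.injective

theorem mem_compStr_of_forall_eq_A_or_T {w : List Base} (hw : ∀ b ∈ w, b = .A ∨ b = .T)
    {b : Base} (hb : b ∈ compStr w) : b = .A ∨ b = .T := by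
  obtain ⟨a, ha, rfl⟩ := List.mem_map.1 hb
  rcases hw a ha with rfl | rfl
  · exact .inr rfl
  · exact .inl rfl

theorem SpecE_eq_Spec {X : Finset (List Base)} {p : List Base} {E : Finset Base}
    (hE : E.Nonempty) (hX : ∀ w ∈ X, ∀ e ∈ E, e ∉ compStr w) : SpecE X p E = Spec X p := by
  ext w
  simp only [SpecE, Spec, Finset.mem_biUnion, Finset.mem_filter]
  constructor
  · rintro ⟨e, he, hw, h⟩
    exact ⟨hw, h.of_append_singleton_of_not_mem (hX w hw e he)⟩
  · rintro ⟨hw, h⟩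
    obtain ⟨e, he⟩ := hE
    exact ⟨e, he, hw, h.trans List.infix_append_left⟩

theorem mem_Spec_intercalate_iff {V : Type} {x : V → List Base} {X : Finset (List Base)}
    (hX : ∀ w, w ∈ X ↔ ∃ v, x v = w) {l : ℕ} (hl : 1 ≤ l)
    (hlen : ∀ v, (x v).length = l) (hC : ∀ v, Base.C ∉ compStr (x v)) (vs : List V)
    (w : List Base) :
    w ∈ Spec X ([Base.C].intercalate (vs.map fun v => compStr (x v))) ↔ ∃ v ∈ vs, x v = w := by
  simp only [Spec, Finset.mem_filter, hX]
  constructor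
  · rintro ⟨⟨v, rfl⟩, h⟩
    have hne : compStr (x v) ≠ [] := by
      rw [← List.length_pos_iff, compStr, List.length_map, hlen]; exact hl
    obtain ⟨v', hv', heq⟩ := List.mem_map.1 <| List.mem_of_infix_intercalate_singleton hne (hC v)
      (by simp [compStr, hlen]) h
    exact ⟨v', hv', compStr_injective heq⟩
  · rintro ⟨v, hv, rfl⟩
    exact ⟨⟨v, rfl⟩, List.infix_intercalate_of_mem (List.mem_map_of_mem hv)⟩

section PrivateNeighbors

variable {U V : Type} (r : U → V → Prop)

def HasPrivateNeighbors (S : Finset U) : Prop :=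
  ∀ u ∈ S, ∃ v, r u v ∧ ∀ u' ∈ S, r u' v → u' = u

variable {r}

theorem exists_inducedMatching_iff_hasPrivateNeighbors (S : Finset U) :
    (∃ V' : Finset V, V'.card = S.card ∧ (∀ u ∈ S, ∃! v, v ∈ V' ∧ r u v) ∧
      (∀ v ∈ V', ∃! u, u ∈ S ∧ r u v)) ↔ HasPrivateNeighbors r S := by
  constructor
  · rintro ⟨V', -, hU, hV⟩ u hu
    obtain ⟨v, ⟨hvV, huv⟩, -⟩ := hU u hu
    obtain ⟨u₀, -, huniq⟩ := hV v hvV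
    exact ⟨v, huv, fun u' hu' hu'v => (huniq u' ⟨hu', hu'v⟩).trans (huniq u ⟨hu, huv⟩).symm⟩
  · intro h
    choose f hf hpriv using h
    have hinj : Function.Injective fun a : S => f a a.2 := fun a b hab =>
      Subtype.ext (hpriv b b.2 a a.2 ((show f a a.2 = f b b.2 from hab) ▸ hf a a.2))
    refine ⟨S.attach.map ⟨_, hinj⟩, by simp, fun u hu => ⟨f u hu, ⟨?_, hf u hu⟩, ?_⟩, ?_⟩
    · exact Finset.mem_map_of_mem _ (S.mem_attach ⟨u, hu⟩)
    · rintro v ⟨hv, huv⟩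
      obtain ⟨⟨u', hu'⟩, -, rfl⟩ := Finset.mem_map.1 hv
      obtain rfl := hpriv u' hu' u hu huv
      rfl
    · intro v hv
      obtain ⟨⟨u₀, hu₀⟩, -, rfl⟩ := Finset.mem_map.1 hv
      exact ⟨u₀, ⟨hu₀, hf u₀ hu₀⟩, fun u ⟨hu, huv⟩ => hpriv u₀ hu₀ u hu huv⟩

theorem stronglyDecodableFam_one_iff_hasPrivateNeighbors [DecidableEq U] {x : V → List Base}
    (hinj : Function.Injective x) {X : Finset (List Base)} {p : U → List Base}
    {E : U → Finset Base} (hspec : ∀ u w, w ∈ Spec X (p u) ↔ ∃ v, r u v ∧ x v = w)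
    (hE : ∀ u, SpecE X (p u) (E u) = Spec X (p u)) (S : Finset U) :
    StronglyDecodableFam X S p E 1 ↔ HasPrivateNeighbors r S := by
  simp only [StronglyDecodableFam, Finset.one_le_card, Finset.Nonempty, Finset.mem_sdiff,
    Finset.mem_biUnion, Finset.mem_erase, hE, hspec]
  refine forall₂_congr fun u hu => ⟨?_, ?_⟩
  · rintro ⟨_, ⟨v, huv, rfl⟩, hfree⟩
    refine ⟨v, huv, fun u' hu' hu'v => ?_⟩
    by_contra hne
    exact hfree ⟨u', ⟨hne, hu'⟩, v, hu'v, rfl⟩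
  · rintro ⟨v, huv, hpriv⟩
    refine ⟨x v, ⟨v, huv, rfl⟩, ?_⟩
    rintro ⟨u', ⟨hne, hu'⟩, v', hu'v', hv'⟩
    exact hne (hpriv u' hu' (hinj hv' ▸ hu'v'))

end PrivateNeighbors

theorem stmt5_general {U V : Type} [DecidableEq U]
    (nbrs : U → List V)
    (l : ℕ) (hl : 1 ≤ l)
    (x : V → List Base) (hinj : Function.Injective x)
    (hx : ∀ v, (x v).length = l ∧ ∀ b ∈ x v, b = Base.A ∨ b = Base.T)
    (X : Finset (List Base)) (hX : ∀ w, w ∈ X ↔ ∃ v, x v = w)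
    (p : U → List Base)
    (hp : ∀ u, p u = List.intercalate [Base.C] ((nbrs u).map (fun v => compStr (x v)))) :
    sSup {k : ℕ | ∃ (U' : Finset U) (V' : Finset V), U'.card = k ∧ V'.card = k ∧
        (∀ u ∈ U', ∃! v, v ∈ V' ∧ v ∈ nbrs u) ∧
        (∀ v ∈ V', ∃! u, u ∈ U' ∧ v ∈ nbrs u)} =
    sSup {k : ℕ | ∃ U' : Finset U, U'.card = k ∧
        StronglyDecodableFam X U' p (fun _ => ({Base.G, Base.C} : Finset Base)) 1} := by
  have hAT (v : V) {b : Base} (hb : b ∈ compStr (x v)) : b = .A ∨ b = .T :=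
    mem_compStr_of_forall_eq_A_or_T (hx v).2 hb
  have hspec : ∀ u w, w ∈ Spec X (p u) ↔ ∃ v, v ∈ nbrs u ∧ x v = w := fun u w => by
    rw [hp]
    exact mem_Spec_intercalate_iff hX hl (fun v => (hx v).1)
      (fun v hC => by simpa using hAT v hC) _ w
  have hE : ∀ u, SpecE X (p u) {Base.G, Base.C} = Spec X (p u) := fun u =>
    SpecE_eq_Spec (Finset.insert_nonempty _ _) fun w hw e he hew => by
      obtain ⟨v, rfl⟩ := (hX w).1 hw
      simp only [Finset.mem_insert, Finset.mem_singleton] at he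
      rcases he with rfl | rfl <;> simpa using hAT v hew
  congr 1
  ext k
  simp only [Set.mem_ofPred_eq, stronglyDecodableFam_one_iff_hasPrivateNeighbors hinj hspec hE,
    ← exists_inducedMatching_iff_hasPrivateNeighbors]
  constructor
  · rintro ⟨U', V', rfl, hV, hmatch⟩
    exact ⟨U', rfl, V', hV, hmatch⟩
  · rintro ⟨U', rfl, V', hV, hmatch⟩
    exact ⟨U', V', rfl, hV, hmatch⟩

/-- The maximum size of an induced matching in the bipartite graph equals the maximum
cardinality of a subset `U' ⊆ U` such that the primers `{p_u : u ∈ U'}` (with extension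
sets `{G, C}`) are strongly 1-decodable w.r.t. `X`. -/
theorem stmt5 {U V : Type} [Fintype U] [Fintype V] [DecidableEq U] [DecidableEq V]
    (nbrs : U → List V)
    (hnodup : ∀ u, (nbrs u).Nodup)
    (hdeg : ∀ u, 1 ≤ (nbrs u).length ∧ (nbrs u).length ≤ 3)
    (l : ℕ) (hl : 1 ≤ l)
    (x : V → List Base) (hinj : Function.Injective x)
    (hx : ∀ v, (x v).length = l ∧ ∀ b ∈ x v, b = Base.A ∨ b = Base.T)
    (X : Finset (List Base)) (hX : ∀ w, w ∈ X ↔ ∃ v, x v = w)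
    (p : U → List Base)
    (hp : ∀ u, p u = List.intercalate [Base.C] ((nbrs u).map (fun v => compStr (x v)))) :
    sSup {k : ℕ | ∃ (U' : Finset U) (V' : Finset V), U'.card = k ∧ V'.card = k ∧
        (∀ u ∈ U', ∃! v, v ∈ V' ∧ v ∈ nbrs u) ∧
        (∀ v ∈ V', ∃! u, u ∈ U' ∧ v ∈ nbrs u)} =
    sSup {k : ℕ | ∃ U' : Finset U, U'.card = k ∧
        StronglyDecodableFam X U' p (fun _ => ({Base.G, Base.C} : Finset Base)) 1} :=
  stmt5_general nbrs l hl x hinj hx X hX p hp
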